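/- arXiv:1209.5014 — 2 statements merged into one kernel-verified Lean document; each statement's English description precedes it below -/
import Mathlib

section
/- Let 𝒩 ⊂ ℤ be a set such that for some constant C > 0, ⟨n⟩ + ⟨k⟩ ≤ C⟨n−k⟩ for all n ∉ 𝒩 and k ∈ 𝒩, where ⟨x⟩ = (1+|x|²)^{1/2}. Let P be the L²(𝕋)-orthogonal projection onto the closed span of {e^{ikx} : k ∈ 𝒩}, let a ∈ C^∞(𝕋), and let p, q ∈ ℕ. Then there exists C' = C'(a,p,q) > 0 such that ‖∂_x^p [a, P] ∂_x^q v‖_{L²(𝕋)} ≤ C' ‖v‖_{L²(𝕋)} for all v ∈ L²(𝕋), where [a,P]v = a·(Pv) − P(a·v) is the commutator of multiplication by a with P. -/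
/-!
On the Fourier side `∂ₓᵖ [a, P] ∂ₓ^q` has matrix `K n k = (in)ᵖ â(n - k) (ik)^q (1_𝒩 k - 1_𝒩 n)`,
which vanishes unless exactly one of `n, k` lies in `𝒩`. There the separation hypothesis gives
`|n|ᵖ |k|^q ≤ (C ⟨n - k⟩)^(p+q)`, and the rapid decay of `â` absorbs this power:
`|K n k| ≲ ⟨n - k⟩⁻²`. A matrix dominated by a summable convolution kernel `w (n - k)` is bounded
on `ℓ²` with norm at most `∑ w` (Schur's test), by Cauchy–Schwarz against the weights `w (n - k)`
in each row.
-/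

noncomputable section

/-- Fourier-side description of `∂_x^p [a,P] ∂_x^q v` at frequency `n`, where
`P` is the projection onto frequencies in `𝒩` and `a` has Fourier coefficients
`ahat`: `(∂_x^p [a,P] ∂_x^q v)^(n) = (in)^p Σ_k ahat (n-k) (ik)^q v k (1_𝒩(k) - 1_𝒩(n))`. -/
def commutatorCoeff (N : Set ℤ) (ahat v : ℤ → ℂ) (p q : ℕ) (n : ℤ) : ℂ :=
  (Complex.I * n) ^ p *
    ∑' k : ℤ, ahat (n - k) * (Complex.I * k) ^ q * v k *
      (N.indicator (fun _ => (1 : ℂ)) k - N.indicator (fun _ => (1 : ℂ)) n)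

open Finset

section WeightedCauchySchwarz

variable {ι : Type*} {w u : ι → ℝ}

theorem summable_mul_of_summable_mul_sq (hw : ∀ i, 0 ≤ w i) (hws : Summable w)
    (hwu : Summable fun i => w i * u i ^ 2) : Summable fun i => w i * u i :=
  ((hws.add hwu).div_const 2).of_norm_bounded fun i => by
    rw [Real.norm_eq_abs, abs_mul, abs_of_nonneg (hw i)]
    have h := mul_nonneg (hw i) (sq_nonneg (|u i| - 1))
    rw [sub_sq, sq_abs] at h
    linarith

theorem sq_tsum_mul_le_tsum_mul_tsum_mul_sq (hw : ∀ i, 0 ≤ w i) (hws : Summable w)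
    (hwu : Summable fun i => w i * u i ^ 2) :
    (∑' i, w i * u i) ^ 2 ≤ (∑' i, w i) * ∑' i, w i * u i ^ 2 := by
  refine le_of_tendsto' ((summable_mul_of_summable_mul_sq hw hws hwu).hasSum.pow 2) fun s => ?_
  calc (∑ i ∈ s, w i * u i) ^ 2 ≤ (∑ i ∈ s, w i) * ∑ i ∈ s, w i * u i ^ 2 :=
        sum_sq_le_sum_mul_sum_of_sq_le_mul s (fun i _ => hw i)
          (fun i _ => mul_nonneg (hw i) (sq_nonneg _)) fun i _ => by rw [mul_pow, ← mul_assoc, sq]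
    _ ≤ (∑' i, w i) * ∑' i, w i * u i ^ 2 :=
        mul_le_mul (hws.sum_le_tsum s fun i _ => hw i)
          (hwu.sum_le_tsum s fun i _ => mul_nonneg (hw i) (sq_nonneg _))
          (sum_nonneg fun i _ => mul_nonneg (hw i) (sq_nonneg _)) (tsum_nonneg hw)

end WeightedCauchySchwarz

theorem tsum_norm_tsum_mul_sq_le {G 𝕜 : Type*} [AddCommGroup G] [NormedRing 𝕜]
    {K : G → G → 𝕜} {v : G → 𝕜} {w : G → ℝ} (hw : ∀ l, 0 ≤ w l) (hws : Summable w)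
    (hK : ∀ n k, ‖K n k‖ ≤ w (n - k)) (hv : Summable fun k => ‖v k‖ ^ 2) :
    ∑' n, ‖∑' k, K n k * v k‖ ^ 2 ≤ (∑' l, w l) ^ 2 * ∑' k, ‖v k‖ ^ 2 := by
  set S := ∑' l, w l
  have hwS : ∀ l, w l ≤ S := fun l => hws.le_tsum l fun j _ => hw j
  have hrow : ∀ n, Summable fun k => w (n - k) := fun n => (Equiv.subLeft n).summable_iff.2 hws
  have hrow_sq : ∀ n, Summable fun k => w (n - k) * ‖v k‖ ^ 2 := fun n =>
    (hv.mul_left S).of_nonneg_of_le (fun k => mul_nonneg (hw _) (sq_nonneg _))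
      fun k => mul_le_mul_of_nonneg_right (hwS _) (sq_nonneg _)
  have hpoint : ∀ n, ‖∑' k, K n k * v k‖ ^ 2 ≤ S * ∑' k, w (n - k) * ‖v k‖ ^ 2 := by
    intro n
    have hnorm : ‖∑' k, K n k * v k‖ ≤ ∑' k, w (n - k) * ‖v k‖ :=
      tsum_of_norm_bounded (summable_mul_of_summable_mul_sq (fun k => hw _) (hrow n)
        (hrow_sq n)).hasSum fun k =>
        (norm_mul_le _ _).trans (mul_le_mul_of_nonneg_right (hK n k) (norm_nonneg _))
    calc ‖∑' k, K n k * v k‖ ^ 2 ≤ (∑' k, w (n - k) * ‖v k‖) ^ 2 :=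
          pow_le_pow_left₀ (norm_nonneg _) hnorm 2
      _ ≤ (∑' k, w (n - k)) * ∑' k, w (n - k) * ‖v k‖ ^ 2 :=
          sq_tsum_mul_le_tsum_mul_tsum_mul_sq (fun k => hw _) (hrow n) (hrow_sq n)
      _ = S * ∑' k, w (n - k) * ‖v k‖ ^ 2 := by
          rw [show ∑' k, w (n - k) = S from (Equiv.subLeft n).tsum_eq w]
  have hcol : ∀ s : Finset G, ∀ k, ∑ n ∈ s, w (n - k) ≤ S := fun s k =>
    ((Equiv.subRight k).summable_iff.2 hws).sum_le_tsum s (fun n _ => hw _) |>.trans_eq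
      ((Equiv.subRight k).tsum_eq w)
  refine tsum_le_of_sum_le' (by positivity) fun s => ?_
  calc ∑ n ∈ s, ‖∑' k, K n k * v k‖ ^ 2 ≤ ∑ n ∈ s, S * ∑' k, w (n - k) * ‖v k‖ ^ 2 :=
        sum_le_sum fun n _ => hpoint n
    _ = S * ∑' k, (∑ n ∈ s, w (n - k)) * ‖v k‖ ^ 2 := by
        simp_rw [← mul_sum, sum_mul, Summable.tsum_finsetSum fun n _ => hrow_sq n]
    _ ≤ S * ∑' k, S * ‖v k‖ ^ 2 := by
        refine mul_le_mul_of_nonneg_left (Summable.tsum_le_tsum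
          (fun k => mul_le_mul_of_nonneg_right (hcol s k) (sq_nonneg _)) ?_ (hv.mul_left S))
          (tsum_nonneg hw)
        simpa only [sum_mul] using summable_sum fun n _ => hrow_sq n
    _ = S ^ 2 * ∑' k, ‖v k‖ ^ 2 := by rw [tsum_mul_left]; ring

theorem summable_inv_one_add_sq : Summable fun l : ℤ => (1 + (l : ℝ) ^ 2)⁻¹ :=
  (Real.summable_one_div_int_pow.2 one_lt_two).of_norm_bounded_eventually <|
    (Filter.eventually_cofinite_ne 0).mono fun l hl => by
      rw [Real.norm_eq_abs, abs_of_pos (by positivity), one_div]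
      exact inv_anti₀ (by positivity) (by linarith)

theorem abs_pow_mul_abs_pow_le {x y c : ℝ} (h : √(1 + x ^ 2) + √(1 + y ^ 2) ≤ c) (p q : ℕ) :
    |x| ^ p * |y| ^ q ≤ c ^ (p + q) := by
  have hx : |x| ≤ c := (Real.abs_le_sqrt (by linarith : x ^ 2 ≤ 1 + x ^ 2)).trans
    (by linarith [Real.sqrt_nonneg (1 + y ^ 2)])
  have hy : |y| ≤ c := (Real.abs_le_sqrt (by linarith : y ^ 2 ≤ 1 + y ^ 2)).trans
    (by linarith [Real.sqrt_nonneg (1 + x ^ 2)])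
  rw [pow_add]
  exact mul_le_mul (pow_le_pow_left₀ (abs_nonneg _) hx p) (pow_le_pow_left₀ (abs_nonneg _) hy q)
    (by positivity) (pow_nonneg ((abs_nonneg _).trans hx) p)

theorem sqrt_pow_mul_rpow_neg_add_two_div_two {z : ℝ} (hz : 0 < z) (m : ℕ) :
    √z ^ m * z ^ (-((m + 2 : ℕ) : ℝ) / 2) = z⁻¹ := by
  rw [Real.sqrt_eq_rpow, ← Real.rpow_natCast, ← Real.rpow_mul hz.le, ← Real.rpow_add hz,
    ← Real.rpow_neg_one]
  congr 1
  push_cast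
  ring

theorem norm_indicator_sub_indicator_le_one {α R : Type*} [NormedRing R] [NormOneClass R]
    (N : Set α) (a b : α) :
    ‖N.indicator (fun _ => (1 : R)) a - N.indicator (fun _ => (1 : R)) b‖ ≤ 1 := by
  by_cases ha : a ∈ N <;> by_cases hb : b ∈ N <;> simp [ha, hb]

def commutatorKernel (N : Set ℤ) (ahat : ℤ → ℂ) (p q : ℕ) (n k : ℤ) : ℂ :=
  (Complex.I * n) ^ p * ahat (n - k) * (Complex.I * k) ^ q *
    (N.indicator (fun _ => (1 : ℂ)) k - N.indicator (fun _ => (1 : ℂ)) n)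

theorem commutatorCoeff_eq_tsum (N : Set ℤ) (ahat v : ℤ → ℂ) (p q : ℕ) (n : ℤ) :
    commutatorCoeff N ahat v p q n = ∑' k, commutatorKernel N ahat p q n k * v k := by
  rw [commutatorCoeff, ← tsum_mul_left]
  congr 1 with k
  rw [commutatorKernel]
  ring

theorem norm_commutatorKernel_le {N : Set ℤ} {C Cm : ℝ} {ahat : ℤ → ℂ} {p q : ℕ} (hC : 0 ≤ C)
    (hCm : 0 ≤ Cm)
    (hsep : ∀ n k : ℤ, n ∉ N → k ∈ N →
      √(1 + (n : ℝ) ^ 2) + √(1 + (k : ℝ) ^ 2) ≤ C * √(1 + ((n : ℝ) - (k : ℝ)) ^ 2))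
    (hdecay : ∀ l : ℤ, ‖ahat l‖ ≤ Cm * (1 + (l : ℝ) ^ 2) ^ (-((p + q + 2 : ℕ) : ℝ) / 2))
    (n k : ℤ) :
    ‖commutatorKernel N ahat p q n k‖ ≤ C ^ (p + q) * Cm * (1 + ((n - k : ℤ) : ℝ) ^ 2)⁻¹ := by
  set z : ℝ := 1 + ((n - k : ℤ) : ℝ) ^ 2
  have hz : 0 < z := by positivity
  by_cases hnk : n ∈ N ↔ k ∈ N
  · have hzero : N.indicator (fun _ => (1 : ℂ)) k - N.indicator (fun _ => (1 : ℂ)) n = 0 := by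
      by_cases hn : n ∈ N
      · simp [hn, hnk.1 hn]
      · simp [hn, mt hnk.2 hn]
    rw [commutatorKernel, hzero, mul_zero, norm_zero]
    positivity
  have hsep' : √(1 + (n : ℝ) ^ 2) + √(1 + (k : ℝ) ^ 2) ≤ C * √z := by
    rw [show z = 1 + ((n : ℝ) - k) ^ 2 by simp [z]]
    by_cases hn : n ∈ N
    · have h := hsep k n (fun hk => hnk (iff_of_true hn hk)) hn
      rwa [add_comm, sub_sq_comm] at h
    · exact hsep n k hn (by_contra fun hk => hnk (iff_of_false hn hk))
  calc ‖commutatorKernel N ahat p q n k‖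
      = |(n : ℝ)| ^ p * |(k : ℝ)| ^ q * ‖ahat (n - k)‖ *
          ‖N.indicator (fun _ => (1 : ℂ)) k - N.indicator (fun _ => (1 : ℂ)) n‖ := by
        simp only [commutatorKernel, norm_mul, norm_pow, Complex.norm_I, Complex.norm_intCast,
          one_mul]
        ring
    _ ≤ (C * √z) ^ (p + q) * ‖ahat (n - k)‖ * 1 := by
        gcongr
        · exact abs_pow_mul_abs_pow_le hsep' p q
        · exact norm_indicator_sub_indicator_le_one N k n
    _ ≤ C ^ (p + q) * (√z ^ (p + q) * (Cm * z ^ (-((p + q + 2 : ℕ) : ℝ) / 2))) := by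
        rw [mul_one, mul_pow, mul_assoc]
        gcongr
        exact hdecay (n - k)
    _ = C ^ (p + q) * Cm * z⁻¹ := by
        rw [mul_left_comm (√z ^ _), sqrt_pow_mul_rpow_neg_add_two_div_two hz]
        ring

/-- **Commutator lemma.** Let `𝒩 ⊆ ℤ` satisfy `⟨n⟩ + ⟨k⟩ ≤ C ⟨n-k⟩` for all
`n ∉ 𝒩`, `k ∈ 𝒩`, let `P` be the projection on the span of `{e^{ikx} : k ∈ 𝒩}`,
and let `a ∈ C^∞(𝕋)` (equivalently, its Fourier coefficients `ahat` decay
faster than any polynomial).  Then for `p, q ∈ ℕ` there is `C' > 0` with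
`‖∂_x^p [a,P] ∂_x^q v‖_{L²} ≤ C' ‖v‖_{L²}` for every `v ∈ L²(𝕋)`. -/
theorem commutator_estimate (N : Set ℤ) (C : ℝ) (hC : 0 < C)
    (hsep : ∀ n k : ℤ, n ∉ N → k ∈ N →
      Real.sqrt (1 + (n : ℝ) ^ 2) + Real.sqrt (1 + (k : ℝ) ^ 2)
        ≤ C * Real.sqrt (1 + ((n : ℝ) - (k : ℝ)) ^ 2))
    (ahat : ℤ → ℂ)
    (hsmooth : ∀ m : ℕ, ∃ Cm : ℝ, 0 < Cm ∧ ∀ l : ℤ,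
      ‖ahat l‖ ≤ Cm * (1 + (l : ℝ) ^ 2) ^ (-(m : ℝ) / 2))
    (p q : ℕ) :
    ∃ C' : ℝ, 0 < C' ∧ ∀ v : ℤ → ℂ,
      Summable (fun k : ℤ => ‖v k‖ ^ 2) →
      ∑' n : ℤ, ‖commutatorCoeff N ahat v p q n‖ ^ 2
        ≤ C' ^ 2 * ∑' k : ℤ, ‖v k‖ ^ 2 := by
  obtain ⟨Cm, hCm, hdecay⟩ := hsmooth (p + q + 2)
  set w : ℤ → ℝ := fun l => C ^ (p + q) * Cm * (1 + (l : ℝ) ^ 2)⁻¹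
  have hw : ∀ l, 0 ≤ w l := fun l => by positivity
  have hws : Summable w := summable_inv_one_add_sq.mul_left _
  refine ⟨∑' l, w l, hws.tsum_pos hw 0 (by positivity), fun v hv => ?_⟩
  simp_rw [commutatorCoeff_eq_tsum]
  exact tsum_norm_tsum_mul_sq_le hw hws
    (norm_commutatorKernel_le hC.le hCm.le hsep hdecay) hv
end
end

section
/- Let ε > 0 and let A be the operator Au = (ℋ − ε)u_xx on H⁰₀(𝕋) with domain H²₀(𝕋), where ℋ is the periodic Hilbert transform. Then the spectrum of A is {(ε + i·sgn(k))k² : k ∈ ℤ\{0}}, and for any θ₀ ∈ (arctan(ε⁻¹), π/2) there exists C > 0 such that for all λ ∈ ℂ with θ₀ < |arg λ| ≤ π, the resolvent bound ‖(A − λ)⁻¹‖ ≤ C/|λ| holds; in particular A is a sectorial operator on H⁰₀(𝕋). -/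
noncomputable section

/-- The Fourier symbol of the operator `A u = (ℋ - ε) u_xx` on mean-zero
functions on `𝕋`: at frequency `k`, `A` acts by multiplication by
`(ε + i sgn k) k²`. -/
def epsBOSymbol (ε : ℝ) (k : ℤ) : ℂ :=
  ((ε : ℂ) + Complex.I * (Int.sign k : ℂ)) * (k : ℂ) ^ 2

/-!
Since `‖epsBOSymbol ε k‖ = √(ε² + 1) k² → ∞`, the distance from `λ` to the symbol
attains its minimum over `k ≠ 0`, which is positive exactly when `λ` is not a value
of the symbol.

Every value of the symbol lies on one of the rays `ℝ₊ (ε ± i)`, which make the angle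
`arctan ε⁻¹` with the positive real axis. When `|arg λ| ≥ θ₀`, the angle between `λ`
and either ray is at least `θ₀ - arctan ε⁻¹`, so the distance from `λ` to the ray is
at least `‖λ‖ sin (θ₀ - arctan ε⁻¹)`: the resolvent bound holds with
`C = 1 / sin (θ₀ - arctan ε⁻¹)`.
-/

open Filter
open Complex (I)

theorem norm_mul_sin_le_norm_smul_sub {E : Type*} [NormedAddCommGroup E]
    [InnerProductSpace ℝ E] {w z : E} {t θ : ℝ} (ht : 0 ≤ t)
    (h : inner ℝ w z ≤ ‖w‖ * ‖z‖ * Real.cos θ) : ‖z‖ * Real.sin θ ≤ ‖t • w - z‖ := by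
  have hsq : ‖t • w - z‖ ^ 2 = t ^ 2 * ‖w‖ ^ 2 - 2 * t * inner ℝ w z + ‖z‖ ^ 2 := by
    rw [norm_sub_sq_real, norm_smul, real_inner_smul_left, Real.norm_of_nonneg ht]
    ring
  -- `‖t • w - z‖² ≥ (t ‖w‖ - ‖z‖ cos θ)² + ‖z‖² sin² θ`
  have hsq_le : (‖z‖ * Real.sin θ) ^ 2 ≤ ‖t • w - z‖ ^ 2 := by
    have hcs := Real.sin_sq_add_cos_sq θ
    rw [hsq]
    nlinarith [sq_nonneg (t * ‖w‖ - ‖z‖ * Real.cos θ),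
      mul_le_mul_of_nonneg_left h (by positivity : 0 ≤ 2 * t)]
  exact le_of_pow_le_pow_left₀ two_ne_zero (norm_nonneg _) hsq_le

theorem Real.mul_cos_add_sin_eq_sqrt_mul_cos_sub {ε : ℝ} (hε : 0 < ε) (ψ : ℝ) :
    ε * Real.cos ψ + Real.sin ψ = √(ε ^ 2 + 1) * Real.cos (ψ - Real.arctan ε⁻¹) := by
  have h : √(1 + ε⁻¹ ^ 2) = √(ε ^ 2 + 1) / ε := by
    rw [show 1 + ε⁻¹ ^ 2 = (ε ^ 2 + 1) / ε ^ 2 by field_simp,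
      Real.sqrt_div (by positivity), Real.sqrt_sq hε.le]
  rw [Real.cos_sub, Real.cos_arctan, Real.sin_arctan, h]
  field_simp

theorem Complex.mul_re_add_abs_im_le {ε θ : ℝ} (hε : 0 < ε) (hθ : Real.arctan ε⁻¹ ≤ θ)
    {z : ℂ} (hz : θ ≤ |z.arg|) :
    ε * z.re + |z.im| ≤ √(ε ^ 2 + 1) * ‖z‖ * Real.cos (θ - Real.arctan ε⁻¹) := by
  have hre : z.re = ‖z‖ * Real.cos |z.arg| := by
    rw [Real.cos_abs, Complex.norm_mul_cos_arg]
  have him : |z.im| = ‖z‖ * Real.sin |z.arg| := by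
    rw [← Complex.norm_mul_sin_arg, abs_mul, abs_norm,
      Real.abs_sin_eq_sin_abs_of_abs_le_pi (Complex.abs_arg_le_pi z)]
  have hcos : Real.cos (|z.arg| - Real.arctan ε⁻¹) ≤ Real.cos (θ - Real.arctan ε⁻¹) :=
    Real.cos_le_cos_of_nonneg_of_le_pi (sub_nonneg.2 hθ)
      (by linarith [Complex.abs_arg_le_pi z, Real.arctan_pos.2 (inv_pos.2 hε)]) (by linarith)
  calc ε * z.re + |z.im| = ‖z‖ * (ε * Real.cos |z.arg| + Real.sin |z.arg|) := by
        rw [hre, him]; ring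
    _ = ‖z‖ * (√(ε ^ 2 + 1) * Real.cos (|z.arg| - Real.arctan ε⁻¹)) := by
        rw [Real.mul_cos_add_sin_eq_sqrt_mul_cos_sub hε]
    _ ≤ ‖z‖ * (√(ε ^ 2 + 1) * Real.cos (θ - Real.arctan ε⁻¹)) := by gcongr
    _ = _ := by ring

theorem epsBOSymbol_eq_smul (ε : ℝ) (k : ℤ) :
    epsBOSymbol ε k = ((k : ℝ) ^ 2) • ((ε : ℂ) + I * (Int.sign k : ℂ)) := by
  rw [Complex.real_smul, epsBOSymbol]; push_cast; ring

theorem norm_ofReal_add_I_mul_sign {k : ℤ} (hk : k ≠ 0) (ε : ℝ) :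
    ‖(ε : ℂ) + I * (Int.sign k : ℂ)‖ = √(ε ^ 2 + 1) := by
  have hsign : ((Int.sign k : ℝ)) ^ 2 = 1 := by
    rcases hk.lt_or_gt with h | h
    · simp [Int.sign_eq_neg_one_of_neg h]
    · simp [Int.sign_eq_one_of_pos h]
  rw [show (ε : ℂ) + I * (Int.sign k : ℂ) = ε + ((Int.sign k : ℝ) : ℂ) * I by
      push_cast; ring,
    Complex.norm_add_mul_I, hsign]

theorem inner_ofReal_add_I_mul_sign (ε : ℝ) (k : ℤ) (z : ℂ) :
    inner ℝ ((ε : ℂ) + I * (Int.sign k : ℂ)) z = ε * z.re + Int.sign k * z.im := by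
  simp [Complex.inner, mul_comm]

theorem Int.cast_sign_mul_le_abs (k : ℤ) (y : ℝ) : (Int.sign k : ℝ) * y ≤ |y| := by
  rcases Int.sign_trichotomy k with h | h | h <;> simp [h, le_abs_self, neg_le_abs]

theorem norm_mul_sin_le_norm_epsBOSymbol_sub {ε θ : ℝ} (hε : 0 < ε)
    (hθ : Real.arctan ε⁻¹ ≤ θ) {z : ℂ} (hz : θ ≤ |z.arg|) {k : ℤ} (hk : k ≠ 0) :
    ‖z‖ * Real.sin (θ - Real.arctan ε⁻¹) ≤ ‖epsBOSymbol ε k - z‖ := by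
  rw [epsBOSymbol_eq_smul]
  refine norm_mul_sin_le_norm_smul_sub (sq_nonneg _) ?_
  rw [inner_ofReal_add_I_mul_sign, norm_ofReal_add_I_mul_sign hk]
  linarith [Int.cast_sign_mul_le_abs k z.im, Complex.mul_re_add_abs_im_le hε hθ hz]

theorem norm_epsBOSymbol (ε : ℝ) (k : ℤ) :
    ‖epsBOSymbol ε k‖ = √(ε ^ 2 + 1) * (k : ℝ) ^ 2 := by
  rcases eq_or_ne k 0 with rfl | hk
  · simp [epsBOSymbol]
  · rw [epsBOSymbol_eq_smul, norm_smul, norm_ofReal_add_I_mul_sign hk,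
      Real.norm_of_nonneg (sq_nonneg _), mul_comm]

theorem tendsto_norm_epsBOSymbol_cofinite (ε : ℝ) :
    Tendsto (fun k => ‖epsBOSymbol ε k‖) cofinite atTop := by
  simp_rw [norm_epsBOSymbol]
  refine Tendsto.const_mul_atTop (by positivity) ?_
  have := (tendsto_pow_atTop two_ne_zero).comp
    (tendsto_norm_cocompact_atTop.comp Int.tendsto_coe_cofinite)
  simpa [Function.comp_def, sq_abs] using this

theorem exists_pos_forall_le_norm_sub_iff {ι E : Type*} [Nonempty ι] [NormedAddCommGroup E]
    {f : ι → E} (hf : Tendsto (fun i => ‖f i‖) cofinite atTop) (z : E) :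
    (∃ δ : ℝ, 0 < δ ∧ ∀ i, δ ≤ ‖f i - z‖) ↔ z ∉ Set.range f := by
  constructor
  · rintro ⟨δ, hδ, h⟩ ⟨i, rfl⟩
    have := h i
    rw [sub_self, norm_zero] at this
    linarith
  · intro hz
    have hdist : Tendsto (fun i => ‖f i - z‖) cofinite atTop :=
      tendsto_atTop_mono (fun i => by linarith [norm_sub_norm_le (f i) z])
        (tendsto_atTop_add_const_right _ (-‖z‖) hf)
    obtain ⟨i₀, hi₀⟩ := hdist.exists_forall_le
    exact ⟨_, norm_pos_iff.2 (sub_ne_zero.2 fun h => hz ⟨i₀, h⟩), hi₀⟩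

/-- **Sectoriality of `A = (ℋ - ε)∂_x²` on `H⁰₀(𝕋)`.**  The operator acts
diagonally with symbol `(ε + i sgn k)k²`.  Its spectrum is exactly
`{(ε + i sgn k)k² : k ∈ ℤ, k ≠ 0}` (a point `λ` lies outside the spectrum iff
the symbol stays uniformly away from `λ`), and for each
`θ₀ ∈ (arctan ε⁻¹, π/2)` there is `C > 0` such that for `θ₀ < |arg λ| ≤ π` the
resolvent bound `‖(A - λ)⁻¹‖ ≤ C/|λ|` holds, i.e. `|λ| ≤ C |symbol(k) - λ|`
for every `k ≠ 0`; in particular `A` is sectorial. -/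
theorem epsBO_spectrum_and_sectorial (ε : ℝ) (hε : 0 < ε) :
    (∀ lam : ℂ,
      (¬ ∃ δ : ℝ, 0 < δ ∧ ∀ k : ℤ, k ≠ 0 → δ ≤ ‖epsBOSymbol ε k - lam‖) ↔
        lam ∈ {z : ℂ | ∃ k : ℤ, k ≠ 0 ∧ z = epsBOSymbol ε k}) ∧
    (∀ θ₀ : ℝ, Real.arctan ε⁻¹ < θ₀ → θ₀ < Real.pi / 2 →
      ∃ C : ℝ, 0 < C ∧ ∀ lam : ℂ, θ₀ < |lam.arg| → |lam.arg| ≤ Real.pi →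
        ∀ k : ℤ, k ≠ 0 →
          ‖lam‖ ≤ C * ‖epsBOSymbol ε k - lam‖) := by
  refine ⟨fun lam => ?_, fun θ₀ hθ₀ _ => ?_⟩
  · have : Nonempty {k : ℤ // k ≠ 0} := ⟨⟨1, one_ne_zero⟩⟩
    have hf := (tendsto_norm_epsBOSymbol_cofinite ε).comp
      (Subtype.val_injective (p := fun k : ℤ => k ≠ 0)).tendsto_cofinite
    have := exists_pos_forall_le_norm_sub_iff hf lam
    simp only [Subtype.forall, Set.mem_range, Subtype.exists] at this
    rw [this, not_not]
    simp [eq_comm]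
  · have hsin : 0 < Real.sin (θ₀ - Real.arctan ε⁻¹) :=
      Real.sin_pos_of_pos_of_lt_pi (by linarith)
        (by linarith [Real.arctan_pos.2 (inv_pos.2 hε), Real.pi_pos])
    refine ⟨(Real.sin (θ₀ - Real.arctan ε⁻¹))⁻¹, inv_pos.2 hsin,
      fun lam hlam _ k hk => ?_⟩
    rw [inv_mul_eq_div, le_div_iff₀ hsin]
    exact norm_mul_sin_le_norm_epsBOSymbol_sub hε hθ₀.le hlam.le hk
end
end
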